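/- Let X and Y be real normed spaces with X nontrivial, and let T : X → Y be a bounded linear operator. For x ∈ X with ‖x‖ = 1, x ∈ m_T if and only if there exist semi-inner-products [·,·]_X on X and [·,·]_Y on Y (each generating the respective norm) such that [Ty, Tx]_Y = m(T)² [y, x]_X for every y ∈ X. -/

import Mathlib

/-!
A semi-inner-product generating the norm amounts to a choice, homogeneous in `y`, of a support
functional `J y` at `y` (`‖J y‖ = ‖y‖`, `J y y = ‖y‖²`), via `[z, y] = J y z`; the choice is free
on each line `ℝ ∙ y`, so `J` may be prescribed at one given point.

If `‖T x‖ = m(T)`, let `f` be a norm-one support functional at `x`. Since `m(T) ‖y‖ ≤ ‖T y‖`, the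
functional `T y ↦ m(T) f y` has norm `≤ 1` on the range of `T`; a Hahn–Banach extension `g` is
then a support functional at `T x`, and `J_X x = f`, `J_Y (T x) = m(T) g` give
`[T y, T x] = m(T)² [y, x]`. Conversely, `y = x` gives `‖T x‖² = m(T)²`.
-/

/-- A semi-inner-product generating the norm on a real normed space. -/
def IsSemiInnerProduct {X : Type*} [NormedAddCommGroup X] [NormedSpace ℝ X]
    (p : X → X → ℝ) : Prop :=
  (∀ x y z : X, p (x + y) z = p x z + p y z) ∧
  (∀ (l : ℝ) (x y : X), p (l • x) y = l * p x y) ∧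
  (∀ (l : ℝ) (x y : X), p x (l • y) = l * p x y) ∧
  (∀ x : X, p x x = ‖x‖ ^ 2) ∧
  (∀ x y : X, (p x y) ^ 2 ≤ p x x * p y y)

/-- The minimum norm of a bounded linear operator. -/
noncomputable def minNorm {X Y : Type*} [NormedAddCommGroup X] [NormedSpace ℝ X]
    [NormedAddCommGroup Y] [NormedSpace ℝ Y] (T : X →L[ℝ] Y) : ℝ :=
  sInf {r : ℝ | ∃ x : X, ‖x‖ = 1 ∧ r = ‖T x‖}

open Submodule

section Factorization

variable {𝕜 X Y : Type*} [RCLike 𝕜] [SeminormedAddCommGroup X] [NormedSpace 𝕜 X]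
  [SeminormedAddCommGroup Y] [NormedSpace 𝕜 Y]

theorem ContinuousLinearMap.norm_apply_le_of_norm_le_one (φ : StrongDual 𝕜 X) (hφ : ‖φ‖ ≤ 1)
    (z : X) : ‖φ z‖ ≤ ‖z‖ :=
  (φ.le_opNorm z).trans (mul_le_of_le_one_left (norm_nonneg z) hφ)

/-- Domination makes `T y ↦ φ y` well defined and of norm `≤ 1` on the range of `T`; extend it
by Hahn–Banach. -/
theorem exists_norm_le_one_comp_eq (T : X →L[𝕜] Y) (φ : StrongDual 𝕜 X)
    (hφ : ∀ y, ‖φ y‖ ≤ ‖T y‖) : ∃ g : StrongDual 𝕜 Y, ‖g‖ ≤ 1 ∧ g.comp T = φ := by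
  let T' : X →ₗ[𝕜] Y := T
  have hker : LinearMap.ker T' ≤ LinearMap.ker (φ : X →ₗ[𝕜] 𝕜) := fun y hy => by
    have h := hφ y
    rw [show T y = 0 from hy, norm_zero] at h
    exact norm_le_zero_iff.mp h
  let ψ : LinearMap.range T' →ₗ[𝕜] 𝕜 :=
    (LinearMap.ker T').liftQ (φ : X →ₗ[𝕜] 𝕜) hker ∘ₗ T'.quotKerEquivRange.symm.toLinearMap
  have hψ : ∀ y, ψ ⟨T' y, LinearMap.mem_range_self T' y⟩ = φ y := fun y => by
    simp only [ψ, LinearMap.comp_apply, LinearEquiv.coe_coe,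
      LinearMap.quotKerEquivRange_symm_apply_image]
    rfl
  have hψ_le : ∀ w, ‖ψ w‖ ≤ 1 * ‖w‖ := by
    rintro ⟨_, y, rfl⟩
    rw [hψ, one_mul]
    exact hφ y
  obtain ⟨g, hg, hg_norm⟩ := exists_extension_norm_eq _ (ψ.mkContinuous 1 hψ_le)
  refine ⟨g, hg_norm ▸ ψ.mkContinuous_norm_le zero_le_one hψ_le, ?_⟩
  ext y
  exact (hg ⟨T y, LinearMap.mem_range_self T' y⟩).trans (hψ y)

end Factorization

section SemiInnerProduct

variable {X : Type*} [NormedAddCommGroup X] [NormedSpace ℝ X]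

theorem IsSemiInnerProduct.apply_self {p : X → X → ℝ} (hp : IsSemiInnerProduct p) (x : X) :
    p x x = ‖x‖ ^ 2 :=
  hp.2.2.2.1 x

theorem abs_apply_eq_norm_of_mem_span_singleton {φ : StrongDual ℝ X} {y v : X}
    (hφ : |φ y| = ‖y‖) (hv : v ∈ ℝ ∙ y) : |φ v| = ‖v‖ := by
  obtain ⟨c, rfl⟩ := mem_span_singleton.mp hv
  rw [map_smul, smul_eq_mul, abs_mul, hφ, norm_smul, Real.norm_eq_abs]

/-- The semi-inner-product `[z, y] = φ_L(y) φ_L(z)` built from a choice of functionals `φ_L`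
indexed by the lines `L = ℝ ∙ y`; indexing by lines makes it homogeneous in `y`. -/
def sipOfLineFunctionals (Φ : Submodule ℝ X → StrongDual ℝ X) (z y : X) : ℝ :=
  Φ (ℝ ∙ y) y * Φ (ℝ ∙ y) z

theorem isSemiInnerProduct_sipOfLineFunctionals {Φ : Submodule ℝ X → StrongDual ℝ X}
    (hΦ_norm : ∀ y, ‖Φ (ℝ ∙ y)‖ ≤ 1) (hΦ_apply : ∀ y, |Φ (ℝ ∙ y) y| = ‖y‖) :
    IsSemiInnerProduct (sipOfLineFunctionals Φ) := by
  have hsq : ∀ y, Φ (ℝ ∙ y) y ^ 2 = ‖y‖ ^ 2 := fun y => by rw [← sq_abs, hΦ_apply]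
  refine ⟨fun a b z => ?_, fun l a b => ?_, fun l a b => ?_, fun a => ?_, fun a b => ?_⟩
  · simp only [sipOfLineFunctionals, map_add, mul_add]
  · simp only [sipOfLineFunctionals, map_smul, smul_eq_mul]
    ring
  · rcases eq_or_ne l 0 with rfl | hl
    · simp [sipOfLineFunctionals]
    · simp only [sipOfLineFunctionals, span_singleton_smul_eq hl.isUnit, map_smul, smul_eq_mul]
      ring
  · rw [sipOfLineFunctionals, ← sq, hsq]
  · have hb : |Φ (ℝ ∙ b) a| ≤ ‖a‖ := (Φ (ℝ ∙ b)).norm_apply_le_of_norm_le_one (hΦ_norm b) a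
    have hb_sq : Φ (ℝ ∙ b) a ^ 2 ≤ ‖a‖ ^ 2 := sq_le_sq' (abs_le.mp hb).1 (abs_le.mp hb).2
    simp only [sipOfLineFunctionals, ← sq, hsq, mul_pow]
    nlinarith [sq_nonneg ‖b‖]

theorem exists_isSemiInnerProduct_apply_eq (x : X) (g : StrongDual ℝ X) (hg : ‖g‖ ≤ 1)
    (hgx : g x = ‖x‖) :
    ∃ p : X → X → ℝ, IsSemiInnerProduct p ∧ ∀ z, p z x = ‖x‖ * g z := by
  choose ψ hψ_norm hψ_apply using fun y : X => exists_dual_vector'' ℝ y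
  let line : X → Submodule ℝ X := fun y => ℝ ∙ y
  let Φ := Function.update (fun L => ψ (Function.invFun line L)) (ℝ ∙ x) g
  have hΦ : ∀ y, ‖Φ (ℝ ∙ y)‖ ≤ 1 ∧ |Φ (ℝ ∙ y) y| = ‖y‖ := by
    intro y
    by_cases hy : ℝ ∙ y = ℝ ∙ x
    · refine ⟨by simpa [Φ, hy] using hg, ?_⟩
      simp only [Φ, hy, Function.update_self]
      exact abs_apply_eq_norm_of_mem_span_singleton (by simp [hgx])
        (hy ▸ mem_span_singleton_self y)
    · simp only [Φ, Function.update_of_ne hy]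
      have hgen : ℝ ∙ Function.invFun line (ℝ ∙ y) = ℝ ∙ y :=
        Function.invFun_eq (f := line) ⟨y, rfl⟩
      refine ⟨hψ_norm _, abs_apply_eq_norm_of_mem_span_singleton
        (y := Function.invFun line (ℝ ∙ y)) (by simp [hψ_apply]) ?_⟩
      rw [hgen]
      exact mem_span_singleton_self y
  refine ⟨sipOfLineFunctionals Φ, isSemiInnerProduct_sipOfLineFunctionals
    (fun y => (hΦ y).1) (fun y => (hΦ y).2), fun z => ?_⟩
  simp [sipOfLineFunctionals, Φ, hgx]

end SemiInnerProduct

section MinNorm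

variable {X Y : Type*} [NormedAddCommGroup X] [NormedSpace ℝ X]
  [NormedAddCommGroup Y] [NormedSpace ℝ Y]

theorem minNorm_nonneg (T : X →L[ℝ] Y) : 0 ≤ minNorm T :=
  Real.sInf_nonneg (by rintro _ ⟨z, -, rfl⟩; exact norm_nonneg _)

theorem minNorm_mul_norm_le (T : X →L[ℝ] Y) (z : X) : minNorm T * ‖z‖ ≤ ‖T z‖ := by
  rcases eq_or_ne z 0 with rfl | hz
  · simp
  have hz' : ‖z‖ ≠ 0 := norm_ne_zero_iff.mpr hz
  have hbdd : BddBelow {r : ℝ | ∃ x : X, ‖x‖ = 1 ∧ r = ‖T x‖} :=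
    ⟨0, by rintro _ ⟨x, -, rfl⟩; exact norm_nonneg _⟩
  have hle : minNorm T ≤ ‖T (‖z‖⁻¹ • z)‖ :=
    csInf_le hbdd ⟨_, by rw [norm_smul, norm_inv, norm_norm, inv_mul_cancel₀ hz'], rfl⟩
  rw [map_smul, norm_smul, norm_inv, norm_norm] at hle
  rwa [← le_div_iff₀ (norm_pos_iff.mpr hz), div_eq_inv_mul]

end MinNorm

theorem stmt_11_general {X Y : Type*} [NormedAddCommGroup X] [NormedSpace ℝ X]
    [NormedAddCommGroup Y] [NormedSpace ℝ Y]
    (T : X →L[ℝ] Y) (x : X) (hx : ‖x‖ = 1) :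
    ‖T x‖ = minNorm T ↔
      ∃ (pX : X → X → ℝ) (pY : Y → Y → ℝ),
        IsSemiInnerProduct pX ∧ IsSemiInnerProduct pY ∧
        ∀ y : X, pY (T y) (T x) = (minNorm T) ^ 2 * pX y x := by
  set m := minNorm T
  constructor
  · intro hTx
    obtain ⟨f, hf_norm, hfx⟩ := exists_dual_vector'' ℝ x
    obtain ⟨g, hg_norm, hgT⟩ := exists_norm_le_one_comp_eq T (m • f) fun y => by
      calc ‖m * f y‖ ≤ m * ‖y‖ := by
            rw [norm_mul, Real.norm_of_nonneg (minNorm_nonneg T)]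
            exact mul_le_mul_of_nonneg_left (f.norm_apply_le_of_norm_le_one hf_norm y)
              (minNorm_nonneg T)
        _ ≤ ‖T y‖ := minNorm_mul_norm_le T y
    have hg_apply : ∀ y, g (T y) = m * f y := fun y => congrArg (· y) hgT
    obtain ⟨pX, hpX, hpX_x⟩ := exists_isSemiInnerProduct_apply_eq x f hf_norm hfx
    obtain ⟨pY, hpY, hpY_Tx⟩ := exists_isSemiInnerProduct_apply_eq (T x) g hg_norm
      (by simp [hg_apply, hfx, hx, hTx])
    refine ⟨pX, pY, hpX, hpY, fun y => ?_⟩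
    rw [hpY_Tx, hpX_x, hg_apply, hTx, hx]
    ring
  · rintro ⟨pX, pY, hpX, hpY, h⟩
    have hsq := h x
    rw [hpY.apply_self, hpX.apply_self, hx, one_pow, mul_one] at hsq
    exact (sq_eq_sq₀ (norm_nonneg _) (minNorm_nonneg T)).mp hsq

theorem stmt_11 {X Y : Type*} [NormedAddCommGroup X] [NormedSpace ℝ X] [Nontrivial X]
    [NormedAddCommGroup Y] [NormedSpace ℝ Y]
    (T : X →L[ℝ] Y) (x : X) (hx : ‖x‖ = 1) :
    ‖T x‖ = minNorm T ↔
      ∃ (pX : X → X → ℝ) (pY : Y → Y → ℝ),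
        IsSemiInnerProduct pX ∧ IsSemiInnerProduct pY ∧
        ∀ y : X, pY (T y) (T x) = (minNorm T) ^ 2 * pX y x :=
  stmt_11_general T x hx
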